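/- For every m > 0, the limit of s_m(r) − log(2r) as r → ∞ exists and is a finite real number. -/

import Mathlib

/-!
Beyond `t = 2m` the integrand `(1 + t² − 2m/t)^{−1/2}` lies below `1/t`, so `s_m(r) − log r` is
eventually nonincreasing. For `t > r₀` it lies above `1/(1 + t)`, so
`s_m(r) ≥ log (1 + r) − log (1 + r₀)` and `s_m(r) − log (2r)` is bounded below. The only analytic
point is integrability at the lower end: `r₀` is a simple root of `t³ + t − 2m`, so the integrand
blows up only like `(t − r₀)^{−1/2}`.
-/

open MeasureTheory

/-- The arclength function `s_m(r) = ∫_{r₀}^{r} (1 + t² − 2m/t)^{−1/2} dt`, the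
`g_m`-distance from the coordinate sphere `S_r` to the boundary sphere `S_{r₀}` in the
Schwarzschild anti-de Sitter space of mass `m`. -/
noncomputable def sm (m r₀ r : ℝ) : ℝ :=
  ∫ t in Set.Ioc r₀ r, (Real.sqrt (1 + t ^ 2 - 2 * m / t))⁻¹

open Set Filter Real Topology

theorem AntitoneOn.exists_tendsto_atTop_of_bddBelow {ι α : Type*} [LinearOrder ι]
    [ConditionallyCompleteLinearOrder α] [TopologicalSpace α] [OrderTopology α]
    {f : ι → α} {R : ι} (hf : AntitoneOn f (Ici R)) (hbdd : BddBelow (f '' Ici R)) :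
    ∃ L, Tendsto f atTop (𝓝 L) := by
  have hanti : Antitone fun x => f (max x R) := fun x y hxy =>
    hf (le_max_right x R) (le_max_right y R) (max_le_max_right R hxy)
  have hbdd' : BddBelow (range fun x => f (max x R)) :=
    hbdd.mono (range_subset_iff.2 fun x => mem_image_of_mem f (le_max_right x R))
  refine ⟨_, (tendsto_atTop_ciInf hanti hbdd').congr' ?_⟩
  filter_upwards [eventually_ge_atTop R] with x hx
  rw [max_eq_left hx]

lemma integrableOn_Ioc_inv_add {a b c : ℝ} (hac : 0 < a + c) :
    IntegrableOn (fun t => (t + c)⁻¹) (Ioc a b) := by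
  refine (ContinuousOn.integrableOn_Icc ?_).mono_set Ioc_subset_Icc_self
  exact (continuousOn_id.add continuousOn_const).inv₀ fun t ht =>
    (show 0 < t + c by linarith [ht.1]).ne'

lemma integral_Ioc_inv_add {a b c : ℝ} (hac : 0 < a + c) (hab : a ≤ b) :
    ∫ t in Ioc a b, (t + c)⁻¹ = log (b + c) - log (a + c) := by
  rw [← intervalIntegral.integral_of_le hab, intervalIntegral.integral_comp_add_right
    (fun t => t⁻¹), integral_inv_of_pos hac (by linarith), log_div (by linarith) hac.ne']

noncomputable def smIntegrand (m t : ℝ) : ℝ := (√(1 + t ^ 2 - 2 * m / t))⁻¹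

lemma sm_eq_integral_smIntegrand (m r₀ r : ℝ) :
    sm m r₀ r = ∫ t in Ioc r₀ r, smIntegrand m t := rfl

lemma smIntegrand_le_inv {m t : ℝ} (ht : 0 < t) (hmt : 2 * m ≤ t) : smIntegrand m t ≤ t⁻¹ := by
  have : 2 * m / t ≤ 1 := (div_le_one ht).2 hmt
  exact inv_anti₀ ht (le_sqrt_of_sq_le (by linarith))

lemma inv_add_one_le_smIntegrand {m t : ℝ} (hm : 0 ≤ m) (ht : 0 < t)
    (hpos : 0 < 1 + t ^ 2 - 2 * m / t) : (t + 1)⁻¹ ≤ smIntegrand m t := by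
  refine inv_anti₀ (sqrt_pos.2 hpos) (sqrt_le_iff.2 ⟨by positivity, ?_⟩)
  have : 0 ≤ 2 * m / t := by positivity
  nlinarith

section

variable {m r₀ : ℝ}

lemma one_add_sq_sub_div_eq_mul (hroot : r₀ ^ 3 + r₀ = 2 * m) {t : ℝ} (ht : t ≠ 0) :
    1 + t ^ 2 - 2 * m / t = (t - r₀) * ((t ^ 2 + r₀ * t + r₀ ^ 2 + 1) / t) := by
  field_simp
  linear_combination hroot

lemma sub_div_le_one_add_sq_sub_div (hr₀ : 0 < r₀) (hroot : r₀ ^ 3 + r₀ = 2 * m) {t r : ℝ}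
    (ht : r₀ < t) (htr : t ≤ r) : (t - r₀) / r ≤ 1 + t ^ 2 - 2 * m / t := by
  have ht0 : 0 < t := hr₀.trans ht
  rw [one_add_sq_sub_div_eq_mul hroot ht0.ne', div_eq_mul_one_div]
  gcongr
  exact le_add_of_nonneg_left (by positivity)

lemma one_add_sq_sub_div_pos (hr₀ : 0 < r₀) (hroot : r₀ ^ 3 + r₀ = 2 * m) {t : ℝ}
    (ht : r₀ < t) : 0 < 1 + t ^ 2 - 2 * m / t :=
  (div_pos (sub_pos.2 ht) (hr₀.trans ht)).trans_le
    (sub_div_le_one_add_sq_sub_div hr₀ hroot ht le_rfl)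

lemma integrableOn_smIntegrand (hr₀ : 0 < r₀) (hroot : r₀ ^ 3 + r₀ = 2 * m) (r : ℝ) :
    IntegrableOn (smIntegrand m) (Ioc r₀ r) := by
  rcases le_or_gt r r₀ with hr | hr
  · simp [Ioc_eq_empty (not_lt.2 hr)]
  have hr0 : 0 < r := hr₀.trans hr
  have hmajorant : IntegrableOn (fun t => √r * (t - r₀) ^ (-(1 / 2) : ℝ)) (Ioc r₀ r) := by
    rw [← intervalIntegrable_iff_integrableOn_Ioc_of_le hr.le]
    simpa using ((intervalIntegral.intervalIntegrable_rpow' (a := 0) (b := r - r₀)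
      (r := -(1 / 2)) (by norm_num)).comp_sub_right r₀).const_mul √r
  refine hmajorant.mono' (by unfold smIntegrand; fun_prop) ?_
  filter_upwards [ae_restrict_mem measurableSet_Ioc] with t ⟨hrt, htr⟩
  have hsub : 0 < t - r₀ := sub_pos.2 hrt
  calc ‖smIntegrand m t‖ = smIntegrand m t := norm_of_nonneg (by unfold smIntegrand; positivity)
    _ ≤ (√((t - r₀) / r))⁻¹ := by
      unfold smIntegrand
      gcongr
      exact sub_div_le_one_add_sq_sub_div hr₀ hroot hrt htr
    _ = √r * (t - r₀) ^ (-(1 / 2) : ℝ) := by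
      rw [sqrt_div hsub.le, inv_div, div_eq_mul_inv, sqrt_eq_rpow (t - r₀), ← rpow_neg hsub.le]

lemma sm_add (hr₀ : 0 < r₀) (hroot : r₀ ^ 3 + r₀ = 2 * m) {a b : ℝ} (ha : r₀ ≤ a)
    (hab : a ≤ b) : sm m r₀ b = sm m r₀ a + ∫ t in Ioc a b, smIntegrand m t := by
  rw [sm_eq_integral_smIntegrand, sm_eq_integral_smIntegrand, ← Ioc_union_Ioc_eq_Ioc ha hab,
    setIntegral_union (Ioc_disjoint_Ioc_of_le le_rfl) measurableSet_Ioc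
      (integrableOn_smIntegrand hr₀ hroot a)
      ((integrableOn_smIntegrand hr₀ hroot b).mono_set (Ioc_subset_Ioc_left ha))]

lemma antitoneOn_sm_sub_log (hr₀ : 0 < r₀) (hroot : r₀ ^ 3 + r₀ = 2 * m) :
    AntitoneOn (fun r => sm m r₀ r - log (2 * r)) (Ici (max r₀ (2 * m))) := by
  intro a ha b _ hab
  have ha₀ : r₀ ≤ a := le_of_max_le_left ha
  have ha0 : 0 < a := hr₀.trans_le ha₀
  have ha0' : 0 < a + 0 := by simpa using ha0
  have hinv : IntegrableOn (fun t => t⁻¹) (Ioc a b) := by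
    simpa using integrableOn_Ioc_inv_add (b := b) ha0'
  have hle : ∫ t in Ioc a b, smIntegrand m t ≤ ∫ t in Ioc a b, t⁻¹ :=
    setIntegral_mono_on ((integrableOn_smIntegrand hr₀ hroot b).mono_set
      (Ioc_subset_Ioc_left ha₀)) hinv measurableSet_Ioc fun t ht =>
        smIntegrand_le_inv (ha0.trans ht.1) ((le_of_max_le_right ha).trans ht.1.le)
  have hlog : ∫ t in Ioc a b, t⁻¹ = log b - log a := by
    simpa using integral_Ioc_inv_add ha0' hab
  dsimp only
  rw [sm_add hr₀ hroot ha₀ hab, log_mul two_ne_zero ha0.ne',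
    log_mul two_ne_zero (ha0.trans_le hab).ne']
  linarith

lemma neg_log_le_sm_sub_log (hr₀ : 0 < r₀) (hroot : r₀ ^ 3 + r₀ = 2 * m) {r : ℝ}
    (hr : r₀ ≤ r) : -log (2 * (r₀ + 1)) ≤ sm m r₀ r - log (2 * r) := by
  have hm : 0 ≤ m := by nlinarith [pow_pos hr₀ 3]
  have hr0 : 0 < r := hr₀.trans_le hr
  have hle : ∫ t in Ioc r₀ r, (t + 1)⁻¹ ≤ sm m r₀ r :=
    setIntegral_mono_on (integrableOn_Ioc_inv_add (by linarith))
      (integrableOn_smIntegrand hr₀ hroot r) measurableSet_Ioc fun t ht =>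
        inv_add_one_le_smIntegrand hm (hr₀.trans ht.1) (one_add_sq_sub_div_pos hr₀ hroot ht.1)
  rw [integral_Ioc_inv_add (by linarith) hr] at hle
  have : log r ≤ log (r + 1) := log_le_log hr0 (by linarith)
  rw [log_mul two_ne_zero hr0.ne', log_mul two_ne_zero (by linarith)]
  linarith

end

theorem penrose_stmt9_general (m r₀ : ℝ) (hr₀ : 0 < r₀)
    (hroot : r₀ ^ 3 + r₀ = 2 * m) :
    ∃ L : ℝ, Filter.Tendsto (fun r => sm m r₀ r - Real.log (2 * r))
      Filter.atTop (nhds L) :=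
  (antitoneOn_sm_sub_log hr₀ hroot).exists_tendsto_atTop_of_bddBelow
    ⟨_, forall_mem_image.2 fun _ hr => neg_log_le_sm_sub_log hr₀ hroot (le_of_max_le_left hr)⟩

/-- For every `m > 0`, the limit of `s_m(r) − log(2r)` as `r → ∞` exists
and is a finite real number.  Here `r₀` is the unique positive real with
`r₀³ + r₀ = 2m`. -/
theorem penrose_stmt9 (m r₀ : ℝ) (hm : 0 < m) (hr₀ : 0 < r₀)
    (hroot : r₀ ^ 3 + r₀ = 2 * m) :
    ∃ L : ℝ, Filter.Tendsto (fun r => sm m r₀ r - Real.log (2 * r))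
      Filter.atTop (nhds L) :=
  penrose_stmt9_general m r₀ hr₀ hroot
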